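/- arXiv:1909.05657 — 9 statements merged into one kernel-verified Lean document; each statement's English description precedes it below -/
import Mathlib

section
/- Let V be a Euclidean vector space of dimension n, and let v_1,…,v_N ∈ V be unit vectors such that the inner products v_i·v_j for i ≠ j take only two values τ₁, τ₂. Assume τ₁ + τ₂ ≤ 0 and 1 + τ₁τ₂n > 0. Then N ≤ (1−τ₁)(1−τ₂)n / (1 + τ₁τ₂n). -/
/-- Elkies' two-distance-set bound. -/
theorem elkies_two_distance_bound {V : Type*} [NormedAddCommGroup V]
    [InnerProductSpace ℝ V] [FiniteDimensional ℝ V] (n N : ℕ)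
    (hn : Module.finrank ℝ V = n) (v : Fin N → V)
    (hinj : Function.Injective v) (hunit : ∀ i, ‖v i‖ = 1) (τ₁ τ₂ : ℝ)
    (hτ : ∀ i j, i ≠ j →
      (inner ℝ (v i) (v j) : ℝ) = τ₁ ∨ (inner ℝ (v i) (v j) : ℝ) = τ₂)
    (h1 : τ₁ + τ₂ ≤ 0) (h2 : 1 + τ₁ * τ₂ * n > 0) :
    (N : ℝ) ≤ (1 - τ₁) * (1 - τ₂) * n / (1 + τ₁ * τ₂ * n) := by
  -- Case n = 0 : then V is trivial and N = 0.
  rcases Nat.eq_zero_or_pos n with hn0 | hnpos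
  · subst hn0
    have hsub : Subsingleton V := by
      rw [← Module.finrank_zero_iff (R := ℝ)]; exact hn
    have hN0 : N = 0 := by
      by_contra h
      have hi : 0 < N := Nat.pos_of_ne_zero h
      have : v ⟨0, hi⟩ = 0 := Subsingleton.elim _ _
      have h0 := hunit ⟨0, hi⟩
      rw [this, norm_zero] at h0
      norm_num at h0
    subst hN0
    simp
  -- Main case : n ≥ 1
  have hn1 : (1 : ℝ) ≤ n := by exact_mod_cast hnpos
  have hnn : (0 : ℝ) ≤ n := by linarith
  -- diagonal inner products are 1
  have htii : ∀ i, (inner ℝ (v i) (v i) : ℝ) = 1 := by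
    intro i
    rw [real_inner_self_eq_norm_sq, hunit i]; norm_num
  -- F1 := full double sum of inner products, nonnegative
  have hF1 : 0 ≤ ∑ i, ∑ j, (inner ℝ (v i) (v j) : ℝ) := by
    have he : ∑ i, ∑ j, (inner ℝ (v i) (v j) : ℝ) = inner ℝ (∑ i, v i) (∑ j, v j) := by
      rw [sum_inner]
      exact Finset.sum_congr rfl fun i _ => by rw [inner_sum]
    rw [he]
    exact real_inner_self_nonneg
  -- pairwise polynomial identity
  have hpair : ∀ i j, (inner ℝ (v i) (v j) : ℝ) ^ 2
      - (τ₁ + τ₂) * (inner ℝ (v i) (v j) : ℝ) + τ₁ * τ₂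
      = if i = j then (1 - τ₁) * (1 - τ₂) else 0 := by
    intro i j
    by_cases h : i = j
    · subst h; rw [htii i]; simp; ring
    · simp only [h, if_false]
      rcases hτ i j h with h' | h' <;> rw [h'] <;> ring
  -- the quadratic sum identity
  have hF2eq : ∑ i, ∑ j, (inner ℝ (v i) (v j) : ℝ) ^ 2
      = (τ₁ + τ₂) * (∑ i, ∑ j, (inner ℝ (v i) (v j) : ℝ))
        - τ₁ * τ₂ * (N : ℝ) ^ 2 + (N : ℝ) * ((1 - τ₁) * (1 - τ₂)) := by
    have hsum : ∑ i, ∑ j, ((inner ℝ (v i) (v j) : ℝ) ^ 2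
        - (τ₁ + τ₂) * (inner ℝ (v i) (v j) : ℝ) + τ₁ * τ₂)
        = (N : ℝ) * ((1 - τ₁) * (1 - τ₂)) := by
      simp_rw [hpair]
      simp [Finset.sum_ite_eq, Finset.card_univ]
    have hexp : ∑ i, ∑ j, ((inner ℝ (v i) (v j) : ℝ) ^ 2
        - (τ₁ + τ₂) * (inner ℝ (v i) (v j) : ℝ) + τ₁ * τ₂)
        = (∑ i, ∑ j, (inner ℝ (v i) (v j) : ℝ) ^ 2)
          - (τ₁ + τ₂) * (∑ i, ∑ j, (inner ℝ (v i) (v j) : ℝ)) + (N : ℝ) ^ 2 * (τ₁ * τ₂) := by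
      simp only [Finset.sum_add_distrib, Finset.sum_sub_distrib, ← Finset.mul_sum,
        Finset.sum_const, Finset.card_univ, Fintype.card_fin, nsmul_eq_mul]
      ring
    rw [hexp] at hsum
    linarith
  -- the trace / Cauchy-Schwarz inequality : N^2 ≤ n * F2
  have hkey : (N : ℝ) ^ 2 ≤ (n : ℝ) * ∑ i, ∑ j, (inner ℝ (v i) (v j) : ℝ) ^ 2 := by
    set b := stdOrthonormalBasis ℝ V with hb
    set m := Module.finrank ℝ V with hm
    have hparse : ∀ x y : V, (inner ℝ x y : ℝ)
        = ∑ k, (inner ℝ x (b k) : ℝ) * (inner ℝ y (b k) : ℝ) := by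
      intro x y
      rw [← b.sum_inner_mul_inner x y]
      exact Finset.sum_congr rfl fun k _ => by rw [real_inner_comm (b k) y]
    set c : Fin N → Fin m → ℝ := fun i k => (inner ℝ (v i) (b k) : ℝ) with hc
    set S : Fin m → Fin m → ℝ := fun k l => ∑ i, c i k * c i l with hS
    have htrace : ∑ k, S k k = (N : ℝ) := by
      simp only [hS]
      rw [Finset.sum_comm]
      have : ∀ i : Fin N, ∑ k, c i k * c i k = 1 := by
        intro i
        rw [← hparse (v i) (v i), htii i]
      simp [this]
    have swap4 : ∀ (f : Fin N → Fin N → Fin m → Fin m → ℝ),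
        (∑ i, ∑ j, ∑ k, ∑ l, f i j k l) = ∑ k, ∑ l, ∑ i, ∑ j, f i j k l := by
      intro f
      have e1 : ∑ p : Fin N × Fin N, ∑ q : Fin m × Fin m, f p.1 p.2 q.1 q.2
          = ∑ i, ∑ j, ∑ k, ∑ l, f i j k l := by
        simp only [Fintype.sum_prod_type]
      have e2 : ∑ q : Fin m × Fin m, ∑ p : Fin N × Fin N, f p.1 p.2 q.1 q.2
          = ∑ k, ∑ l, ∑ i, ∑ j, f i j k l := by
        simp only [Fintype.sum_prod_type]
      rw [← e1, ← e2, Finset.sum_comm]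
    have hF2' : ∑ i, ∑ j, (inner ℝ (v i) (v j) : ℝ) ^ 2 = ∑ k, ∑ l, S k l ^ 2 := by
      have ht' : ∀ i j, (inner ℝ (v i) (v j) : ℝ) = ∑ k, c i k * c j k :=
        fun i j => hparse (v i) (v j)
      simp only [sq]
      simp_rw [ht', hS, Finset.sum_mul_sum]
      rw [swap4 (fun i j k l => c i k * c j k * (c i l * c j l))]
      refine Finset.sum_congr rfl fun k _ => Finset.sum_congr rfl fun l _ => ?_
      exact Finset.sum_congr rfl fun i _ => Finset.sum_congr rfl fun j _ => by ring
    have hcs : (∑ k, S k k) ^ 2 ≤ (m : ℝ) * ∑ k, (S k k) ^ 2 := by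
      have := sq_sum_le_card_mul_sum_sq (s := (Finset.univ : Finset (Fin m)))
        (f := fun k => S k k)
      simpa using this
    have hdiag : ∑ k, (S k k) ^ 2 ≤ ∑ k, ∑ l, S k l ^ 2 := by
      refine Finset.sum_le_sum fun k _ => ?_
      exact Finset.single_le_sum (fun l _ => sq_nonneg (S k l)) (Finset.mem_univ k)
    have hmn : (m : ℝ) = (n : ℝ) := by exact_mod_cast hn
    calc (N : ℝ) ^ 2 = (∑ k, S k k) ^ 2 := by rw [htrace]
      _ ≤ (m : ℝ) * ∑ k, (S k k) ^ 2 := hcs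
      _ = (n : ℝ) * ∑ k, (S k k) ^ 2 := by rw [hmn]
      _ ≤ (n : ℝ) * ∑ k, ∑ l, S k l ^ 2 := by
          exact mul_le_mul_of_nonneg_left hdiag hnn
      _ = (n : ℝ) * ∑ i, ∑ j, (inner ℝ (v i) (v j) : ℝ) ^ 2 := by rw [hF2']
  -- combine
  have h3 : (τ₁ + τ₂) * (∑ i, ∑ j, (inner ℝ (v i) (v j) : ℝ)) ≤ 0 :=
    mul_nonpos_of_nonpos_of_nonneg h1 hF1
  have h5 : (N : ℝ) ^ 2 * (1 + τ₁ * τ₂ * n) ≤ (N : ℝ) * ((1 - τ₁) * (1 - τ₂) * n) := by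
    rw [hF2eq] at hkey
    nlinarith [mul_nonpos_of_nonneg_of_nonpos hnn h3]
  rcases Nat.eq_zero_or_pos N with hN0 | hNpos
  · subst hN0
    push_cast
    apply div_nonneg _ (le_of_lt h2)
    rcases le_or_gt 0 (τ₁ * τ₂) with hp | hp
    · have : 0 ≤ (1 - τ₁) * (1 - τ₂) := by nlinarith
      exact mul_nonneg this hnn
    · have h6 : 0 ≤ (n - 1 : ℝ) * (-(τ₁ * τ₂)) :=
        mul_nonneg (by linarith) (by linarith)
      have : 0 ≤ (1 - τ₁) * (1 - τ₂) := by nlinarith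
      exact mul_nonneg this hnn
  · have hNpos' : (0 : ℝ) < N := by exact_mod_cast hNpos
    rw [le_div_iff₀ h2]
    have goal' : (N : ℝ) * ((N : ℝ) * (1 + τ₁ * τ₂ * n))
        ≤ (N : ℝ) * ((1 - τ₁) * (1 - τ₂) * n) := by nlinarith [h5]
    exact le_of_mul_le_mul_left goal' hNpos'
end

section
/- Let S be a finite set with |S| = n, and let 𝔖 be a collection of 3-element subsets of S such that for any r, s ∈ 𝔖 the symmetric difference |r △ s| lies in {0, 4, 6}. Then |𝔖| ≤ ⌊n·⌊(n−1)/2⌋/3⌋. -/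
/-! Two triples of `𝔖` share at most one point, so the triples through a point `x` become pairwise
disjoint pairs once `x` is removed; hence every point lies in at most `⌊(n - 1) / 2⌋` triples.
Counting incidences between points and triples then gives `3 |𝔖| ≤ n ⌊(n - 1) / 2⌋`. -/

open Finset
open scoped symmDiff

namespace Finset

variable {α : Type*} [DecidableEq α]

theorem card_symmDiff_add_two_mul_card_inter (s t : Finset α) :
    #(s ∆ t) + 2 * #(s ∩ t) = #s + #t := by
  have hsub : s ∩ t ⊆ s ∪ t := inter_subset_left.trans subset_union_left
  rw [symmDiff_eq_sup_sdiff_inf, sup_eq_union, inf_eq_inter, card_sdiff_of_subset hsub]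
  have := card_union_add_card_inter s t
  have := card_le_card hsub
  omega

theorem card_inter_le_one_of_card_symmDiff {s t : Finset α} (hs : #s = 3) (ht : #t = 3)
    (hst : s ≠ t) (h : #(s ∆ t) ∈ ({0, 4, 6} : Set ℕ)) : #(s ∩ t) ≤ 1 := by
  have hsymm := card_symmDiff_add_two_mul_card_inter s t
  have hne : #(s ∆ t) ≠ 0 := by simpa using hst
  simp only [Set.mem_insert_iff, Set.mem_singleton_iff] at h
  omega

theorem mul_card_filter_mem_le {S : Finset α} {𝔖 : Finset (Finset α)} {k : ℕ}
    (hsub : ∀ s ∈ 𝔖, s ⊆ S) (hcard : ∀ s ∈ 𝔖, #s = k)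
    (hinter : ∀ s ∈ 𝔖, ∀ t ∈ 𝔖, s ≠ t → #(s ∩ t) ≤ 1) {x : α} (hx : x ∈ S) :
    (k - 1) * #{s ∈ 𝔖 | x ∈ s} ≤ #S - 1 := by
  set T := {s ∈ 𝔖 | x ∈ s}
  have hdisj : (T : Set (Finset α)).PairwiseDisjoint (·.erase x) := by
    intro s hs t ht hst
    simp only [coe_filter, Set.mem_ofPred_eq, T] at hs ht
    refine disjoint_left.2 fun y hys hyt ↦ ?_
    have : 1 < #(s ∩ t) := one_lt_card.2
      ⟨x, mem_inter.2 ⟨hs.2, ht.2⟩, y, mem_inter.2 ⟨mem_of_mem_erase hys, mem_of_mem_erase hyt⟩,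
        (ne_of_mem_erase hys).symm⟩
    exact (hinter s hs.1 t ht.1 hst).not_gt this
  have hunion : T.biUnion (·.erase x) ⊆ S.erase x := by
    simp only [biUnion_subset, mem_filter, T]
    exact fun s hs ↦ erase_subset_erase x (hsub s hs.1)
  calc (k - 1) * #T = #(T.biUnion (·.erase x)) := by
        rw [card_biUnion hdisj, mul_comm, ← smul_eq_mul, ← sum_const]
        refine sum_congr rfl fun s hs ↦ ?_
        rw [mem_filter] at hs
        rw [card_erase_of_mem hs.2, hcard s hs.1]
    _ ≤ #(S.erase x) := card_le_card hunion
    _ = #S - 1 := card_erase_of_mem hx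

end Finset

/-- General bound of Lemma `lem.max.set.A` for m = 3. -/
theorem triple_system_bound {α : Type*} [DecidableEq α] (S : Finset α) (n : ℕ)
    (hS : S.card = n) (𝔖 : Finset (Finset α))
    (hsub : ∀ s ∈ 𝔖, s ⊆ S) (hcard : ∀ s ∈ 𝔖, s.card = 3)
    (hdiff : ∀ r ∈ 𝔖, ∀ s ∈ 𝔖, (symmDiff r s).card ∈ ({0, 4, 6} : Set ℕ)) :
    𝔖.card ≤ n * ((n - 1) / 2) / 3 := by
  have hinter : ∀ r ∈ 𝔖, ∀ s ∈ 𝔖, r ≠ s → #(r ∩ s) ≤ 1 := fun r hr s hs hrs ↦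
    card_inter_le_one_of_card_symmDiff (hcard r hr) (hcard s hs) hrs (hdiff r hr s hs)
  have hdeg : ∀ x ∈ S, #{s ∈ 𝔖 | x ∈ s} ≤ (n - 1) / 2 := fun x hx ↦ by
    have := mul_card_filter_mem_le hsub hcard hinter hx
    rw [hS] at this
    omega
  have hincidences : ∑ s ∈ 𝔖, #(S ∩ s) = 3 * #𝔖 := by
    rw [sum_congr rfl fun s hs ↦ by rw [inter_eq_right.2 (hsub s hs), hcard s hs], sum_const,
      smul_eq_mul, mul_comm]
  rw [Nat.le_div_iff_mul_le three_pos, mul_comm, ← hincidences]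
  exact (sum_card_inter_le hdeg).trans_eq (by rw [hS])
end

section
/- Let 𝔖 be a collection of subsets of a set S with |S| = 7 such that for any r, s ∈ 𝔖 the symmetric difference |r △ s| lies in {0, 4, 6}. Then |𝔖| ≤ 8. -/
/-!
Plotkin's bound. Count the pairs `(r, s) ∈ 𝔖 × 𝔖` together with a point `x ∈ r ∆ s`. Distinct
members are at distance at least `4`, so there are at least `4 m (m - 1)` of them, `m = #𝔖`.
On the other hand a point `x` lying in `k` of the members lies in `r ∆ s` for exactly `2 k (m - k)`
pairs, which is at most `m² / 2`; so there are at most `7 m² / 2` of them. Hence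
`8 (m - 1) ≤ 7 m`, that is `m ≤ 8`.
-/

open Finset

section Plotkin

variable {α : Type*} [DecidableEq α]

lemma card_eq_sum_ite_mem_of_subset {S t : Finset α} (h : t ⊆ S) :
    #t = ∑ x ∈ S, if x ∈ t then 1 else 0 := by
  rw [sum_boole, filter_mem_eq_inter, inter_eq_right.mpr h, Nat.cast_id]

lemma card_filter_mem_symmDiff (𝔖 : Finset (Finset α)) (x : α) (r : Finset α) :
    #{s ∈ 𝔖 | x ∈ symmDiff r s} = if x ∈ r then #{s ∈ 𝔖 | x ∉ s} else #{s ∈ 𝔖 | x ∈ s} := by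
  split_ifs with hx <;> congr 1 <;> exact filter_congr fun s _ => by simp [mem_symmDiff, hx]

lemma sum_card_filter_mem_symmDiff (𝔖 : Finset (Finset α)) (x : α) :
    ∑ r ∈ 𝔖, #{s ∈ 𝔖 | x ∈ symmDiff r s} = 2 * #{s ∈ 𝔖 | x ∈ s} * #{s ∈ 𝔖 | x ∉ s} := by
  simp only [card_filter_mem_symmDiff, sum_ite, sum_const, smul_eq_mul]
  ring

lemma sum_sum_card_symmDiff_eq {S : Finset α} {𝔖 : Finset (Finset α)}
    (hsub : ∀ s ∈ 𝔖, s ⊆ S) :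
    ∑ r ∈ 𝔖, ∑ s ∈ 𝔖, #(symmDiff r s) = ∑ x ∈ S, 2 * #{s ∈ 𝔖 | x ∈ s} * #{s ∈ 𝔖 | x ∉ s} :=
  calc ∑ r ∈ 𝔖, ∑ s ∈ 𝔖, #(symmDiff r s)
      = ∑ r ∈ 𝔖, ∑ s ∈ 𝔖, ∑ x ∈ S, if x ∈ symmDiff r s then (1 : ℕ) else 0 :=
        sum_congr rfl fun r hr => sum_congr rfl fun s hs =>
          card_eq_sum_ite_mem_of_subset
            ((symmDiff_le_sup (a := r) (b := s)).trans (union_subset (hsub r hr) (hsub s hs)))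
    _ = ∑ x ∈ S, ∑ r ∈ 𝔖, ∑ s ∈ 𝔖, if x ∈ symmDiff r s then 1 else 0 :=
        (sum_congr rfl fun _ _ => sum_comm).trans sum_comm
    _ = ∑ x ∈ S, 2 * #{s ∈ 𝔖 | x ∈ s} * #{s ∈ 𝔖 | x ∉ s} := by
        simp only [sum_boole, Nat.cast_id, sum_card_filter_mem_symmDiff]

lemma two_mul_sum_sum_card_symmDiff_le {S : Finset α} {𝔖 : Finset (Finset α)}
    (hsub : ∀ s ∈ 𝔖, s ⊆ S) :
    2 * ∑ r ∈ 𝔖, ∑ s ∈ 𝔖, #(symmDiff r s) ≤ #S * #𝔖 ^ 2 := by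
  have hpoint : ∀ x ∈ S, 2 * (2 * #{s ∈ 𝔖 | x ∈ s} * #{s ∈ 𝔖 | x ∉ s}) ≤ #𝔖 ^ 2 := by
    intro x _
    have := four_mul_le_sq_add #{s ∈ 𝔖 | x ∈ s} #{s ∈ 𝔖 | x ∉ s}
    rw [card_filter_add_card_filter_not] at this
    linarith
  rw [sum_sum_card_symmDiff_eq hsub, mul_sum]
  exact (sum_le_sum hpoint).trans (by rw [sum_const, smul_eq_mul])

lemma le_sum_sum_card_symmDiff {𝔖 : Finset (Finset α)} {d : ℕ}
    (hd : ∀ r ∈ 𝔖, ∀ s ∈ 𝔖, r ≠ s → d ≤ #(symmDiff r s)) :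
    #𝔖 * ((#𝔖 - 1) * d) ≤ ∑ r ∈ 𝔖, ∑ s ∈ 𝔖, #(symmDiff r s) := by
  refine card_nsmul_le_sum _ _ _ fun r hr => ?_
  rw [← sum_erase 𝔖 (f := fun s => #(symmDiff r s)) (a := r) (by simp), ← card_erase_of_mem hr]
  exact card_nsmul_le_sum _ _ _ fun s hs => hd r hr s (mem_of_mem_erase hs) (ne_of_mem_erase hs).symm

theorem plotkin_bound {S : Finset α} {𝔖 : Finset (Finset α)} {d : ℕ}
    (hsub : ∀ s ∈ 𝔖, s ⊆ S) (hd : ∀ r ∈ 𝔖, ∀ s ∈ 𝔖, r ≠ s → d ≤ #(symmDiff r s)) :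
    #𝔖 * (2 * d - #S) ≤ 2 * d := by
  have hupper := two_mul_sum_sum_card_symmDiff_le hsub
  have hlower := le_sum_sum_card_symmDiff hd
  obtain h0 | ⟨k, hk⟩ : #𝔖 = 0 ∨ ∃ k, #𝔖 = k + 1 := by cases #𝔖 <;> simp
  · simp [h0]
  rw [hk] at hupper hlower ⊢
  have hdiv : k * (2 * d) ≤ (k + 1) * #S := by
    refine Nat.le_of_mul_le_mul_left ?_ k.succ_pos
    simp only [add_tsub_cancel_right] at hlower
    nlinarith
  rw [Nat.mul_sub, add_mul k 1 (2 * d), one_mul]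
  omega

end Plotkin

/-- The case n = 7 of Lemma `lem.max.set.D`. -/
theorem subset_system_card_seven {α : Type*} [DecidableEq α] (S : Finset α)
    (hS : S.card = 7) (𝔖 : Finset (Finset α))
    (hsub : ∀ s ∈ 𝔖, s ⊆ S)
    (hdiff : ∀ r ∈ 𝔖, ∀ s ∈ 𝔖, (symmDiff r s).card ∈ ({0, 4, 6} : Set ℕ)) :
    𝔖.card ≤ 8 := by
  have hd : ∀ r ∈ 𝔖, ∀ s ∈ 𝔖, r ≠ s → 4 ≤ #(symmDiff r s) := by
    intro r hr s hs hrs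
    have hne : #(symmDiff r s) ≠ 0 := by simpa [symmDiff_eq_bot] using hrs
    have h := hdiff r hr s hs
    simp only [Set.mem_insert_iff, Set.mem_singleton_iff] at h
    omega
  have hplotkin := plotkin_bound hsub hd
  rw [hS] at hplotkin
  omega
end

section
/- Let S be a finite set with |S| = 10, and let 𝔖 be a collection of subsets of S such that: (i) for any r, s ∈ 𝔖, |r △ s| ∈ {0, 4, 6, 10}; and (ii) s ∈ 𝔖 implies the complement S∖s ∈ 𝔖. Then |𝔖| ≤ 32. -/
/-!
Encode each `r ⊆ S` by its `±1` sign vector `v_r` on `S`, so that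
`⟨v_r, v_s⟩ = |S| - 2 |r △ s|`. Double counting the squared inner products of the `N` vectors,
`∑_{r,s} ⟨v_r, v_s⟩² = ∑_{a,b} (∑_r v_r(a) v_r(b))² ≥ ∑_a (∑_r v_r(a)²)² = |S| N²`.
For `|S| = 10` the hypothesis makes `⟨v_r, v_s⟩² = 4` unless `s = r` or `s = S \ r`, where it is
`100`; so each row contributes at most `4N + 192`. Hence `10 N² ≤ N (4N + 192)`, i.e. `N ≤ 32`.
-/

open Finset

section GramSums

variable {ι κ R : Type*}

theorem sum_sum_sq_sum_mul_comm [CommSemiring R] (A : Finset ι) (S : Finset κ) (F : ι → κ → R) :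
    ∑ r ∈ A, ∑ s ∈ A, (∑ a ∈ S, F r a * F s a) ^ 2
      = ∑ a ∈ S, ∑ b ∈ S, (∑ r ∈ A, F r a * F r b) ^ 2 := by
  simp only [sq, sum_mul_sum, ← sum_product']
  refine sum_nbij' (fun x => (x.2.2.1, x.2.2.2, x.1, x.2.1))
    (fun y => (y.2.2.1, y.2.2.2, y.1, y.2.1)) ?_ ?_ (fun _ _ => rfl) (fun _ _ => rfl)
    fun _ _ => by ring
  all_goals simp +contextual [mem_product]

theorem sum_sq_sum_sq_le_sum_sum_sq_sum_mul [CommRing R] [LinearOrder R] [IsStrictOrderedRing R]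
    (A : Finset ι) (S : Finset κ) (F : ι → κ → R) :
    ∑ a ∈ S, (∑ r ∈ A, F r a ^ 2) ^ 2 ≤ ∑ r ∈ A, ∑ s ∈ A, (∑ a ∈ S, F r a * F s a) ^ 2 := by
  rw [sum_sum_sq_sum_mul_comm]
  refine sum_le_sum fun a ha => ?_
  have hdiag := single_le_sum (f := fun b => (∑ r ∈ A, F r a * F r b) ^ 2)
    (fun _ _ => sq_nonneg _) ha
  simpa only [sq (F _ a)] using hdiag

end GramSums

section SignVectors

variable {α : Type*} [DecidableEq α]

def signVec (r : Finset α) (a : α) : ℤ := if a ∈ r then 1 else -1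

theorem signVec_sq (r : Finset α) (a : α) : signVec r a ^ 2 = 1 := by
  unfold signVec; split_ifs <;> norm_num

theorem sum_signVec_mul_signVec {S r s : Finset α} (hr : r ⊆ S) (hs : s ⊆ S) :
    ∑ a ∈ S, signVec r a * signVec s a = (#S : ℤ) - 2 * #(symmDiff r s) := by
  have hterm : ∀ a ∈ S, signVec r a * signVec s a
      = 1 - 2 * (if a ∈ symmDiff r s then (1 : ℤ) else 0) := by
    intro a _
    unfold signVec
    by_cases har : a ∈ r <;> by_cases has : a ∈ s <;> simp [har, has, mem_symmDiff]
  have hsub : symmDiff r s ⊆ S := symmDiff_subset_union.trans (union_subset hr hs)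
  rw [sum_congr rfl hterm, sum_sub_distrib, ← mul_sum, sum_boole, filter_mem_eq_inter,
    inter_eq_right.mpr hsub]
  simp

theorem sq_sum_signVec_mul_signVec_le (S r s : Finset α) :
    (∑ a ∈ S, signVec r a * signVec s a) ^ 2 ≤ (#S : ℤ) ^ 2 := by
  have habs : |∑ a ∈ S, signVec r a * signVec s a| ≤ #S :=
    (abs_sum_le_sum_abs _ _).trans_eq <| by
      simp [signVec, apply_ite (|·|), mul_ite]
  exact sq_le_sq' (abs_le.mp habs).1 (abs_le.mp habs).2

theorem eq_sdiff_of_card_symmDiff_eq_card {S r s : Finset α} (hr : r ⊆ S) (hs : s ⊆ S)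
    (h : #(symmDiff r s) = #S) : s = S \ r := by
  have hS : symmDiff r s = S :=
    eq_of_subset_of_card_le (symmDiff_subset_union.trans (union_subset hr hs)) h.ge
  calc s = symmDiff r (symmDiff r s) := (symmDiff_symmDiff_cancel_left r s).symm
    _ = S \ r := by rw [hS, symmDiff_of_le hr]

variable {S r : Finset α} {𝔖 : Finset (Finset α)} {c : ℤ}

theorem sum_sq_sum_signVec_mul_le (hc : c ≤ (#S : ℤ) ^ 2)
    (hbound : ∀ s ∈ 𝔖, s ≠ r → s ≠ S \ r → (∑ a ∈ S, signVec r a * signVec s a) ^ 2 ≤ c) :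
    ∑ s ∈ 𝔖, (∑ a ∈ S, signVec r a * signVec s a) ^ 2 ≤ c * #𝔖 + 2 * ((#S : ℤ) ^ 2 - c) := by
  have hterm : ∀ s ∈ 𝔖, (∑ a ∈ S, signVec r a * signVec s a) ^ 2
      ≤ c + ((#S : ℤ) ^ 2 - c) * (if s ∈ ({r, S \ r} : Finset _) then 1 else 0) := by
    intro s hs
    split_ifs with hpair
    · simpa using sq_sum_signVec_mul_signVec_le S r s
    · simp only [mem_insert, mem_singleton, not_or] at hpair
      simpa using hbound s hs hpair.1 hpair.2
  have hexceptional : #{s ∈ 𝔖 | s ∈ ({r, S \ r} : Finset _)} ≤ 2 :=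
    (card_le_card fun _ hs => (mem_filter.mp hs).2).trans card_le_two
  calc ∑ s ∈ 𝔖, (∑ a ∈ S, signVec r a * signVec s a) ^ 2
      ≤ ∑ s ∈ 𝔖, (c + ((#S : ℤ) ^ 2 - c) * (if s ∈ ({r, S \ r} : Finset _) then 1 else 0)) :=
        sum_le_sum hterm
    _ = c * #𝔖 + ((#S : ℤ) ^ 2 - c) * #{s ∈ 𝔖 | s ∈ ({r, S \ r} : Finset _)} := by
        rw [sum_add_distrib, ← mul_sum, sum_boole, sum_const, nsmul_eq_mul, mul_comm]
    _ ≤ c * #𝔖 + 2 * ((#S : ℤ) ^ 2 - c) := by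
        rw [mul_comm (2 : ℤ)]
        gcongr
        linarith

theorem card_mul_le_of_sq_sum_signVec_mul_le (hc : c ≤ (#S : ℤ) ^ 2)
    (hbound : ∀ r ∈ 𝔖, ∀ s ∈ 𝔖, s ≠ r → s ≠ S \ r →
      (∑ a ∈ S, signVec r a * signVec s a) ^ 2 ≤ c) :
    ((#S : ℤ) - c) * #𝔖 ≤ 2 * ((#S : ℤ) ^ 2 - c) := by
  have hgram : (#S : ℤ) * #𝔖 ^ 2 ≤ #𝔖 * (c * #𝔖 + 2 * ((#S : ℤ) ^ 2 - c)) := by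
    calc (#S : ℤ) * #𝔖 ^ 2 = ∑ a ∈ S, (∑ r ∈ 𝔖, signVec r a ^ 2) ^ 2 := by simp [signVec_sq]
      _ ≤ ∑ r ∈ 𝔖, ∑ s ∈ 𝔖, (∑ a ∈ S, signVec r a * signVec s a) ^ 2 :=
        sum_sq_sum_sq_le_sum_sum_sq_sum_mul _ _ _
      _ ≤ ∑ _r ∈ 𝔖, (c * #𝔖 + 2 * ((#S : ℤ) ^ 2 - c)) :=
        sum_le_sum fun r hr => sum_sq_sum_signVec_mul_le hc (hbound r hr)
      _ = #𝔖 * (c * #𝔖 + 2 * ((#S : ℤ) ^ 2 - c)) := by simp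
  rcases (Nat.cast_nonneg (α := ℤ) #𝔖).eq_or_lt with h0 | hpos
  · rw [← h0]; linarith
  · nlinarith

end SignVectors

theorem subset_system_card_ten_general {α : Type*} [DecidableEq α] (S : Finset α)
    (hS : S.card = 10) (𝔖 : Finset (Finset α))
    (hsub : ∀ s ∈ 𝔖, s ⊆ S)
    (hdiff : ∀ r ∈ 𝔖, ∀ s ∈ 𝔖, (symmDiff r s).card ∈ ({0, 4, 6, 10} : Set ℕ)) :
    𝔖.card ≤ 32 := by
  have hbound : ∀ r ∈ 𝔖, ∀ s ∈ 𝔖, s ≠ r → s ≠ S \ r →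
      (∑ a ∈ S, signVec r a * signVec s a) ^ 2 ≤ 4 := by
    intro r hr s hs hsr hsc
    rw [sum_signVec_mul_signVec (hsub r hr) (hsub s hs), hS]
    rcases hdiff r hr s hs with h | h | h | h
    · exact absurd (symmDiff_eq_bot.mp (card_eq_zero.mp h)).symm hsr
    · rw [h]; norm_num
    · rw [h]; norm_num
    · exact absurd
        (eq_sdiff_of_card_symmDiff_eq_card (hsub r hr) (hsub s hs) (h.trans hS.symm)) hsc
  have h := card_mul_le_of_sq_sum_signVec_mul_le (by simp [hS]) hbound
  rw [hS] at h
  omega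

/-- The case n = 10 of Lemma `lem.max.set.D`. -/
theorem subset_system_card_ten {α : Type*} [DecidableEq α] (S : Finset α)
    (hS : S.card = 10) (𝔖 : Finset (Finset α))
    (hsub : ∀ s ∈ 𝔖, s ⊆ S)
    (hdiff : ∀ r ∈ 𝔖, ∀ s ∈ 𝔖, (symmDiff r s).card ∈ ({0, 4, 6, 10} : Set ℕ))
    (hcompl : ∀ s ∈ 𝔖, S \ s ∈ 𝔖) :
    𝔖.card ≤ 32 :=
  subset_system_card_ten_general S hS 𝔖 hsub hdiff
end

section
/- With ε_o defined as in A_n (ε_o = (1/(n+1))(|ō|·Σ_{i∈o}eᵢ − |o|·Σ_{i∈ō}eᵢ) in ℝ^{n+1}), if r and s are subsets of {1,…,n+1} with |r| = |s|, then ε_r² − ε_r·ε_s = |r △ s|/2. -/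
/-!
Write `ε_o = 𝟙_o - (|o|/(n+1)) • 𝟙`. Then `ε_r² - ε_r·ε_s = ε_r·(ε_r - ε_s)`, and when `|r| = |s|`
the constant parts cancel in `ε_r - ε_s = 𝟙_r - 𝟙_s`. Pairing this with `ε_r` gives
`|r \ s| - (|r|/(n+1))(|r| - |s|) = |r \ s|`, which is half of `|r △ s|` because `|r \ s| = |s \ r|`.
-/

open Finset
open scoped symmDiff

lemma Finset.card_symmDiff_eq_two_mul_card_sdiff {α : Type*} [DecidableEq α] {s t : Finset α}
    (h : #s = #t) : #(s ∆ t) = 2 * #(s \ t) := by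
  rw [Finset.symmDiff_def, card_union_of_disjoint disjoint_sdiff_sdiff, card_sdiff_comm h]
  ring

lemma card_compl_div_card_eq_one_sub {ι : Type*} [Fintype ι] [DecidableEq ι] [Nonempty ι]
    (o : Finset ι) : (#oᶜ : ℝ) / Fintype.card ι = 1 - #o / Fintype.card ι := by
  have hpos : (0 : ℝ) < Fintype.card ι := by exact_mod_cast Fintype.card_pos
  rw [card_compl, Nat.cast_sub (card_le_univ o)]
  field_simp

lemma sum_boole_sub_const_mul_boole_sub_boole {ι : Type*} [Fintype ι] [DecidableEq ι]
    (r s : Finset ι) (c : ℝ) :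
    ∑ i, ((if i ∈ r then 1 else 0) - c) * ((if i ∈ r then 1 else 0) - (if i ∈ s then 1 else 0))
      = #(r \ s) - c * (#r - #s) := by
  have hpoint : ∀ i, ((if i ∈ r then (1 : ℝ) else 0) - c) *
      ((if i ∈ r then 1 else 0) - (if i ∈ s then 1 else 0))
      = (if i ∈ r \ s then 1 else 0) - c * ((if i ∈ r then 1 else 0) - (if i ∈ s then 1 else 0)) := by
    intro i
    by_cases hr : i ∈ r <;> by_cases hs : i ∈ s <;> simp [hr, hs]
  simp only [hpoint, sum_sub_distrib, ← mul_sum, sum_boole, filter_mem_eq_inter, univ_inter]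

/-- For subsets of equal cardinality, ε_r² − ε_r·ε_s = |r △ s|/2. -/
theorem An_epsilon_symmDiff (n : ℕ)
    (ε : Finset (Fin (n + 1)) → (Fin (n + 1) → ℝ))
    (hε : ∀ o i, ε o i =
      if i ∈ o then (oᶜ.card : ℝ) / (n + 1) else -(o.card : ℝ) / (n + 1))
    (r s : Finset (Fin (n + 1))) (hrs : r.card = s.card) :
    ∑ i, ε r i * ε r i - ∑ i, ε r i * ε s i = ((symmDiff r s).card : ℝ) / 2 := by
  have hε_boole : ∀ o i, ε o i = (if i ∈ o then 1 else 0) - #o / ((n : ℝ) + 1) := by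
    intro o i
    have hcompl := card_compl_div_card_eq_one_sub o
    simp only [Fintype.card_fin, Nat.cast_add, Nat.cast_one] at hcompl
    rw [hε]
    split_ifs
    · exact hcompl
    · ring
  have hdiff : ∀ i, ε r i - ε s i = (if i ∈ r then 1 else 0) - (if i ∈ s then 1 else 0) := by
    intro i
    rw [hε_boole, hε_boole, hrs]
    ring
  calc ∑ i, ε r i * ε r i - ∑ i, ε r i * ε s i = ∑ i, ε r i * (ε r i - ε s i) := by
        simp only [mul_sub, sum_sub_distrib]
    _ = #(r \ s) - #r / ((n : ℝ) + 1) * (#r - #s) := by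
        rw [sum_congr rfl fun i _ => by rw [hdiff, hε_boole r]]
        exact sum_boole_sub_const_mul_boole_sub_boole r s _
    _ = ((symmDiff r s).card : ℝ) / 2 := by
        rw [hrs, sub_self, mul_zero, sub_zero, card_symmDiff_eq_two_mul_card_sdiff hrs]
        push_cast
        ring
end

section
/- Let S be a positive definite even lattice containing a vector ℏ with ℏ² = 6 and ℏ ∈ 3S^∨ (i.e., x·ℏ ≡ 0 mod 3 for all x ∈ S). If r ∈ S is a root (r² = 2), then r·ℏ ∈ {0, 3, −3}, and if r·ℏ = ±3 then (ℏ∓r)² = 2, i.e. ℏ∓r is a root. Consequently, S contains a root if and only if S contains a root orthogonal to ℏ. -/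
/-- Roots in a positive definite even lattice S with ℏ² = 6, ℏ ∈ 3S^∨. -/
theorem roots_and_polarization {M : Type*} [AddCommGroup M]
    (b : LinearMap.BilinForm ℤ M) (hsymm : ∀ x y, b x y = b y x)
    (hpos : ∀ x : M, x ≠ 0 → 0 < b x x) (heven : ∀ x : M, 2 ∣ b x x)
    (ℏ : M) (hℏ : b ℏ ℏ = 6) (hdiv : ∀ x : M, (3 : ℤ) ∣ b x ℏ) :
    (∀ r : M, b r r = 2 →
      (b r ℏ = 0 ∨ b r ℏ = 3 ∨ b r ℏ = -3) ∧
      (b r ℏ = 3 → b (ℏ - r) (ℏ - r) = 2) ∧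
      (b r ℏ = -3 → b (ℏ + r) (ℏ + r) = 2)) ∧
    ((∃ r : M, b r r = 2) ↔ ∃ r : M, b r r = 2 ∧ b r ℏ = 0) := by
  have hnn : ∀ v : M, 0 ≤ b v v := by
    intro v
    by_cases hv : v = 0
    · simp [hv]
    · exact (hpos v hv).le
  have key : ∀ r : M, b r r = 2 → b r ℏ = 0 ∨ b r ℏ = 3 ∨ b r ℏ = -3 := by
    intro r hr
    set t := b r ℏ with ht
    have h1 : 0 ≤ b ((6 : ℤ) • r - t • ℏ) ((6 : ℤ) • r - t • ℏ) := hnn _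
    have hexp : b ((6 : ℤ) • r - t • ℏ) ((6 : ℤ) • r - t • ℏ)
        = 36 * b r r - 6 * t * b r ℏ - 6 * t * b ℏ r + t * t * b ℏ ℏ := by
      simp only [map_sub, map_smul, LinearMap.sub_apply, LinearMap.smul_apply,
        smul_eq_mul]
      ring
    rw [hexp, hr, hℏ, hsymm ℏ r, ← ht] at h1
    have hsq : t * t ≤ 12 := by nlinarith
    obtain ⟨k, hk⟩ := hdiv r
    rw [← ht] at hk
    rw [hk] at hsq
    have hk2 : -1 ≤ k ∧ k ≤ 1 := by constructor <;> nlinarith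
    obtain ⟨h1', h2'⟩ := hk2
    interval_cases k <;> omega
  have poly : ∀ r : M, b r r = 2 →
      (b r ℏ = 3 → b (ℏ - r) (ℏ - r) = 2) ∧
      (b r ℏ = -3 → b (ℏ + r) (ℏ + r) = 2) := by
    intro r hr
    constructor <;> intro h3 <;>
    · simp only [map_sub, map_add, LinearMap.sub_apply, LinearMap.add_apply]
      simp only [hℏ, hr, hsymm ℏ r, h3]; ring
  refine ⟨fun r hr => ⟨key r hr, poly r hr⟩, ?_, fun ⟨r, hr, _⟩ => ⟨r, hr⟩⟩
  rintro ⟨r, hr⟩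
  rcases key r hr with h0 | h3 | h3
  · exact ⟨r, hr, h0⟩
  · refine ⟨ℏ - (2 : ℤ) • r, ?_, ?_⟩ <;>
    · simp only [map_sub, map_smul, LinearMap.sub_apply, LinearMap.smul_apply,
        smul_eq_mul]
      simp only [hℏ, hr, hsymm ℏ r, h3]; ring
  · refine ⟨ℏ + (2 : ℤ) • r, ?_, ?_⟩ <;>
    · simp only [map_add, map_smul, LinearMap.add_apply, LinearMap.smul_apply,
        smul_eq_mul]
      simp only [hℏ, hr, hsymm ℏ r, h3]; ring
end

section
/- Let S be a positive definite even lattice with a vector ℏ of square 6 such that the orthogonal complement ℏ^⊥ ⊂ S contains no roots (vectors of square 2) and ℏ ∈ 3S^∨. Let 𝔏 = {l ∈ S : l² = 4, l·ℏ = 3} and suppose 𝔏 is invariant under l ↦ l* := ℏ − l. Then for any l₁, l₂ ∈ 𝔏, the product l₁·l₂ takes only the values 4 (iff l₁ = l₂), −1 (iff l₂ = l₁*), 1, or 2. -/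
/-!
For `l₁, l₂ ∈ 𝔏` with `t = l₁·l₂`, the vector `l₁ - l₂` lies in `ℏ^⊥` and has square `8 - 2t`,
so positivity gives `t ≤ 4` with equality iff `l₁ = l₂`, and the absence of roots gives `t ≠ 3`.
The involution `l ↦ ℏ - l` preserves `𝔏` and turns `t` into `3 - t`, which yields `t ≥ -1`
with equality iff `l₂ = ℏ - l₁`, and `t ≠ 0`.
-/

namespace LinearMap.BilinForm

variable {R M : Type*} [CommRing R] [AddCommGroup M] [Module R M] {b : LinearMap.BilinForm R M}
  {ℏ : M}

theorem apply_sub_sub (hsymm : ∀ x y, b x y = b y x) (x y : M) :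
    b (x - y) (x - y) = b x x + b y y - 2 * b x y := by
  simp only [map_sub, LinearMap.sub_apply, hsymm y x]
  ring

theorem apply_self_nonneg [Preorder R] (hpos : ∀ x : M, x ≠ 0 → 0 < b x x) (x : M) :
    0 ≤ b x x := by
  rcases eq_or_ne x 0 with rfl | hx
  · simp
  · exact (hpos x hx).le

theorem apply_self_eq_zero_iff [Preorder R] (hpos : ∀ x : M, x ≠ 0 → 0 < b x x) {x : M} :
    b x x = 0 ↔ x = 0 := by
  refine ⟨fun h ↦ ?_, fun h ↦ by simp [h]⟩
  by_contra hx
  exact (hpos x hx).ne' h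

def lines (b : LinearMap.BilinForm R M) (ℏ : M) : Set M := {l | b l l = 4 ∧ b l ℏ = 3}

theorem sub_mem_lines (hsymm : ∀ x y, b x y = b y x) (hℏ : b ℏ ℏ = 6) {l : M}
    (hl : l ∈ lines b ℏ) : ℏ - l ∈ lines b ℏ := by
  obtain ⟨hll, hlℏ⟩ := hl
  refine ⟨?_, ?_⟩
  · rw [apply_sub_sub hsymm, hℏ, hll, hsymm, hlℏ]
    ring
  · rw [map_sub, LinearMap.sub_apply, hℏ, hlℏ]
    norm_num

theorem apply_sub_right_of_mem_lines {l₁ l₂ : M} (hl₁ : l₁ ∈ lines b ℏ) :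
    b l₁ (ℏ - l₂) = 3 - b l₁ l₂ := by
  rw [map_sub, hl₁.2]

section Lines

variable (hsymm : ∀ x y, b x y = b y x) {l₁ l₂ : M} (hl₁ : l₁ ∈ lines b ℏ) (hl₂ : l₂ ∈ lines b ℏ)
include hl₁ hl₂

theorem apply_sub_left_of_mem_lines : b (l₁ - l₂) ℏ = 0 := by
  rw [map_sub, LinearMap.sub_apply, hl₁.2, hl₂.2, sub_self]

include hsymm

theorem apply_sub_sub_of_mem_lines : b (l₁ - l₂) (l₁ - l₂) = 8 - 2 * b l₁ l₂ := by
  rw [apply_sub_sub hsymm, hl₁.1, hl₂.1]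
  ring

theorem apply_ne_three_of_mem_lines (hnoroot : ∀ x : M, b x ℏ = 0 → b x x ≠ 2) :
    b l₁ l₂ ≠ 3 := by
  intro h
  refine hnoroot _ (apply_sub_left_of_mem_lines hl₁ hl₂) ?_
  rw [apply_sub_sub_of_mem_lines hsymm hl₁ hl₂, h]
  norm_num

variable [LinearOrder R] [IsStrictOrderedRing R] (hpos : ∀ x : M, x ≠ 0 → 0 < b x x)
include hpos

theorem apply_le_four_of_mem_lines : b l₁ l₂ ≤ 4 := by
  have := apply_self_nonneg hpos (l₁ - l₂)
  rw [apply_sub_sub_of_mem_lines hsymm hl₁ hl₂] at this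
  linarith

theorem apply_eq_four_iff_of_mem_lines : b l₁ l₂ = 4 ↔ l₁ = l₂ := by
  rw [← sub_eq_zero (a := l₁), ← apply_self_eq_zero_iff hpos,
    apply_sub_sub_of_mem_lines hsymm hl₁ hl₂]
  constructor <;> intro h <;> linarith

end Lines

end LinearMap.BilinForm

open LinearMap.BilinForm

theorem line_products_positive_definite_general {M : Type*} [AddCommGroup M]
    (b : LinearMap.BilinForm ℤ M) (hsymm : ∀ x y, b x y = b y x)
    (hpos : ∀ x : M, x ≠ 0 → 0 < b x x)
    (ℏ : M) (hℏ : b ℏ ℏ = 6)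
    (hnoroot : ∀ x : M, b x ℏ = 0 → b x x ≠ 2)
    (𝔏 : Set M) (h𝔏 : 𝔏 = {l : M | b l l = 4 ∧ b l ℏ = 3}) :
    ∀ l₁ ∈ 𝔏, ∀ l₂ ∈ 𝔏,
      (b l₁ l₂ = 4 ↔ l₁ = l₂) ∧
      (b l₁ l₂ = -1 ↔ l₂ = ℏ - l₁) ∧
      (b l₁ l₂ = 4 ∨ b l₁ l₂ = -1 ∨ b l₁ l₂ = 1 ∨ b l₁ l₂ = 2) := by
  subst h𝔏
  intro l₁ hl₁ l₂ hl₂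
  have hl₂' : ℏ - l₂ ∈ lines b ℏ := sub_mem_lines hsymm hℏ hl₂
  have hdual : b l₁ (ℏ - l₂) = 3 - b l₁ l₂ := apply_sub_right_of_mem_lines hl₁
  have hle := apply_le_four_of_mem_lines hsymm hl₁ hl₂ hpos
  have hle' := apply_le_four_of_mem_lines hsymm hl₁ hl₂' hpos
  have hne := apply_ne_three_of_mem_lines hsymm hl₁ hl₂ hnoroot
  have hne' := apply_ne_three_of_mem_lines hsymm hl₁ hl₂' hnoroot
  refine ⟨apply_eq_four_iff_of_mem_lines hsymm hl₁ hl₂ hpos, ?_, by omega⟩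
  rw [eq_sub_iff_add_eq', ← eq_sub_iff_add_eq,
    ← apply_eq_four_iff_of_mem_lines hsymm hl₁ hl₂' hpos, hdual]
  omega

/-- Possible products of lines in an admissible positive definite lattice. -/
theorem line_products_positive_definite {M : Type*} [AddCommGroup M]
    (b : LinearMap.BilinForm ℤ M) (hsymm : ∀ x y, b x y = b y x)
    (hpos : ∀ x : M, x ≠ 0 → 0 < b x x) (heven : ∀ x : M, 2 ∣ b x x)
    (ℏ : M) (hℏ : b ℏ ℏ = 6) (hdiv : ∀ x : M, (3 : ℤ) ∣ b x ℏ)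
    (hnoroot : ∀ x : M, b x ℏ = 0 → b x x ≠ 2)
    (𝔏 : Set M) (h𝔏 : 𝔏 = {l : M | b l l = 4 ∧ b l ℏ = 3})
    (hstar : ∀ l ∈ 𝔏, ℏ - l ∈ 𝔏) :
    ∀ l₁ ∈ 𝔏, ∀ l₂ ∈ 𝔏,
      (b l₁ l₂ = 4 ↔ l₁ = l₂) ∧
      (b l₁ l₂ = -1 ↔ l₂ = ℏ - l₁) ∧
      (b l₁ l₂ = 4 ∨ b l₁ l₂ = -1 ∨ b l₁ l₂ = 1 ∨ b l₁ l₂ = 2) :=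
  line_products_positive_definite_general b hsymm hpos ℏ hℏ hnoroot 𝔏 h𝔏
end

section
/- Let NS be an even lattice with a vector h of square 2, and suppose the orthogonal complement h^⊥ ⊂ NS contains no vectors of square −2. Then for any l₁, l₂ ∈ NS with l₁² = l₂² = −2 and l₁·h = l₂·h = 1, the product l₁·l₂ equals −2 (iff l₁ = l₂), 3 (iff l₂ = h − l₁), 0, or 1, provided NS is hyperbolic (signature (1, rank−1)). -/
/-!
Both `l₁ - l₂` and `l₁ + l₂ - h` lie in `h^⊥`, and their squares `-4 - 2 l₁·l₂` and `2 l₁·l₂ - 6`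
are even. A nonzero even vector of `h^⊥` has square at most `-4`, since `h^⊥` is negative definite
and has no roots. Hence `l₁·l₂ ≥ 0` unless `l₁ = l₂`, and `l₁·l₂ ≤ 1` unless `l₂ = h - l₁`.
-/

section

variable {M : Type*} [AddCommGroup M] {b : LinearMap.BilinForm ℤ M} {h : M}

def IsLineClass (b : LinearMap.BilinForm ℤ M) (h l : M) : Prop :=
  b l l = -2 ∧ b l h = 1

theorem sq_le_neg_four_of_orthogonal (hhyp : ∀ x : M, b x h = 0 → x ≠ 0 → b x x < 0)
    (hnoroot : ∀ x : M, b x h = 0 → b x x ≠ -2) {x : M} (hxh : b x h = 0) (hx : x ≠ 0)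
    (heven : Even (b x x)) : b x x ≤ -4 := by
  obtain ⟨k, hk⟩ := heven
  have hneg := hhyp x hxh hx
  have hne := hnoroot x hxh
  omega

namespace IsLineClass

variable {l₁ l₂ : M}

theorem sub_orthogonal (hl₁ : IsLineClass b h l₁) (hl₂ : IsLineClass b h l₂) :
    b (l₁ - l₂) h = 0 := by
  simp [hl₁.2, hl₂.2]

theorem sub_sq (hsymm : ∀ x y, b x y = b y x) (hl₁ : IsLineClass b h l₁)
    (hl₂ : IsLineClass b h l₂) : b (l₁ - l₂) (l₁ - l₂) = -4 - 2 * b l₁ l₂ := by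
  simp only [map_sub, LinearMap.sub_apply, hl₁.1, hl₂.1, hsymm l₂ l₁]
  ring

theorem add_sub_orthogonal (hh : b h h = 2) (hl₁ : IsLineClass b h l₁)
    (hl₂ : IsLineClass b h l₂) : b (l₁ + l₂ - h) h = 0 := by
  simp [hl₁.2, hl₂.2, hh]

theorem add_sub_sq (hsymm : ∀ x y, b x y = b y x) (hh : b h h = 2)
    (hl₁ : IsLineClass b h l₁) (hl₂ : IsLineClass b h l₂) :
    b (l₁ + l₂ - h) (l₁ + l₂ - h) = 2 * b l₁ l₂ - 6 := by
  simp only [map_sub, map_add, LinearMap.sub_apply, LinearMap.add_apply, hl₁.1, hl₂.1, hl₁.2,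
    hl₂.2, hh, hsymm l₂ l₁, hsymm h l₁, hsymm h l₂]
  ring

theorem inner_dual (hl₁ : IsLineClass b h l₁) : b l₁ (h - l₁) = 3 := by
  simp [hl₁.1, hl₁.2]

variable (hsymm : ∀ x y, b x y = b y x)
  (hhyp : ∀ x : M, b x h = 0 → x ≠ 0 → b x x < 0) (hnoroot : ∀ x : M, b x h = 0 → b x x ≠ -2)
include hsymm hhyp hnoroot

theorem inner_nonneg_of_ne (hl₁ : IsLineClass b h l₁) (hl₂ : IsLineClass b h l₂)
    (hne : l₁ ≠ l₂) : 0 ≤ b l₁ l₂ := by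
  have hle := sq_le_neg_four_of_orthogonal hhyp hnoroot (hl₁.sub_orthogonal hl₂)
    (sub_ne_zero.mpr hne) (by rw [hl₁.sub_sq hsymm hl₂]; exact ⟨-2 - b l₁ l₂, by ring⟩)
  rw [hl₁.sub_sq hsymm hl₂] at hle
  omega

theorem inner_le_one_of_ne_dual (hh : b h h = 2) (hl₁ : IsLineClass b h l₁)
    (hl₂ : IsLineClass b h l₂) (hne : l₂ ≠ h - l₁) : b l₁ l₂ ≤ 1 := by
  have hne' : l₁ + l₂ - h ≠ 0 := fun h0 => hne (by rw [← sub_eq_zero, ← h0]; abel)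
  have hle := sq_le_neg_four_of_orthogonal hhyp hnoroot (hl₁.add_sub_orthogonal hh hl₂) hne'
    (by rw [hl₁.add_sub_sq hsymm hh hl₂]; exact ⟨b l₁ l₂ - 3, by ring⟩)
  rw [hl₁.add_sub_sq hsymm hh hl₂] at hle
  omega

end IsLineClass

end

theorem line_products_hyperbolic_general {M : Type*} [AddCommGroup M]
    (b : LinearMap.BilinForm ℤ M) (hsymm : ∀ x y, b x y = b y x)
    (h : M) (hh : b h h = 2)
    (hhyp : ∀ x : M, b x h = 0 → x ≠ 0 → b x x < 0)
    (hnoroot : ∀ x : M, b x h = 0 → b x x ≠ -2) :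
    ∀ l₁ l₂ : M, b l₁ l₁ = -2 → b l₁ h = 1 → b l₂ l₂ = -2 → b l₂ h = 1 →
      (b l₁ l₂ = -2 ↔ l₁ = l₂) ∧
      (b l₁ l₂ = 3 ↔ l₂ = h - l₁) ∧
      (b l₁ l₂ = -2 ∨ b l₁ l₂ = 3 ∨ b l₁ l₂ = 0 ∨ b l₁ l₂ = 1) := by
  intro l₁ l₂ h11 h1h h22 h2h
  have hl₁ : IsLineClass b h l₁ := ⟨h11, h1h⟩
  have hl₂ : IsLineClass b h l₂ := ⟨h22, h2h⟩
  have hnonneg := fun hne => hl₁.inner_nonneg_of_ne hsymm hhyp hnoroot hl₂ hne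
  have hle_one := fun hne => hl₁.inner_le_one_of_ne_dual hsymm hhyp hnoroot hh hl₂ hne
  have hself : l₁ = l₂ → b l₁ l₂ = -2 := fun e => e ▸ h11
  have hdual : l₂ = h - l₁ → b l₁ l₂ = 3 := fun e => e ▸ hl₁.inner_dual
  refine ⟨⟨fun hc => ?_, hself⟩, ⟨fun hc => ?_, hdual⟩, ?_⟩
  · by_contra hne; linarith [hnonneg hne]
  · by_contra hne; linarith [hle_one hne]
  · by_cases e₁ : l₁ = l₂
    · exact Or.inl (hself e₁)
    by_cases e₂ : l₂ = h - l₁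
    · exact Or.inr (Or.inl (hdual e₂))
    have := hnonneg e₁
    have := hle_one e₂
    omega

/-- Possible products of line classes in a hyperbolic 2-polarized lattice. -/
theorem line_products_hyperbolic {M : Type*} [AddCommGroup M]
    (b : LinearMap.BilinForm ℤ M) (hsymm : ∀ x y, b x y = b y x)
    (heven : ∀ x : M, 2 ∣ b x x)
    (h : M) (hh : b h h = 2)
    (hhyp : ∀ x : M, b x h = 0 → x ≠ 0 → b x x < 0)
    (hnoroot : ∀ x : M, b x h = 0 → b x x ≠ -2) :
    ∀ l₁ l₂ : M, b l₁ l₁ = -2 → b l₁ h = 1 → b l₂ l₂ = -2 → b l₂ h = 1 →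
      (b l₁ l₂ = -2 ↔ l₁ = l₂) ∧
      (b l₁ l₂ = 3 ↔ l₂ = h - l₁) ∧
      (b l₁ l₂ = -2 ∨ b l₁ l₂ = 3 ∨ b l₁ l₂ = 0 ∨ b l₁ l₂ = 1) :=
  line_products_hyperbolic_general b hsymm h hh hhyp hnoroot
end

section
/- Under the hypotheses of the self-dual block decomposition (each block B_k with defect δ_k = l_k² − l_k·l̄_k where l̄_k = ℏ_k − l_k), for any two vectors l', l'' in the orbit restriction to B_k one has 0 ≤ l_k² − l'·l'' ≤ δ_k, with the extreme values attained exactly for l'' = l' and l'' = l̄' respectively. Consequently, if δ_k = 1, at most one vector of the restriction can occur in an admissible set, and if δ_k = 2, at most two can occur, and any maximal admissible pair is of the form {l_k, l̄_k}. -/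
/-!
Both bounds come from positivity of two squared lengths: `‖l' - l''‖² = 2 (lsq - l'·l'')`
and, since the dual `h - l'` lies in the same block and `lsq - (h - l')·l'' = δ - (lsq - l'·l'')`,
`‖l'' - (h - l')‖² = 2 (δ - (lsq - l'·l''))`. The admissible values `2, 3, 5` then exceed
`δ = 1`, and for `δ = 2` only the value `δ` itself remains, which forces duality.
-/

namespace LinearMap.BilinForm

section Positive

variable {R V : Type*} [CommRing R] [Preorder R] [AddCommGroup V] [Module R V]
  {B : LinearMap.BilinForm R V}

theorem apply_self_nonneg_of_pos (hpos : ∀ x : V, x ≠ 0 → 0 < B x x) (x : V) :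
    0 ≤ B x x := by
  rcases eq_or_ne x 0 with rfl | hx
  · simp
  · exact (hpos x hx).le

theorem apply_self_eq_zero_iff_of_pos (hpos : ∀ x : V, x ≠ 0 → 0 < B x x) {x : V} :
    B x x = 0 ↔ x = 0 := by
  refine ⟨fun h0 => ?_, fun hx => by simp [hx]⟩
  by_contra hx
  exact (hpos x hx).ne' h0

end Positive

section Field

variable {R V : Type*} [Field R] [AddCommGroup V] [Module R V] {B : LinearMap.BilinForm R V}

theorem apply_sub_left_of_apply_eq_half (hsymm : ∀ x y, B x y = B y x) {h x y : V}
    (hyh : B y h = B h h / 2) : B (h - x) y = B h h / 2 - B x y := by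
  rw [map_sub, LinearMap.sub_apply, hsymm, hyh]

end Field

variable {R V : Type*} [Field R] [LinearOrder R] [IsStrictOrderedRing R]
  [AddCommGroup V] [Module R V] {B : LinearMap.BilinForm R V}

theorem two_mul_sub_apply_eq_apply_sub (hsymm : ∀ x y, B x y = B y x) {c : R} {x y : V}
    (hx : B x x = c) (hy : B y y = c) : 2 * (c - B x y) = B (x - y) (x - y) := by
  have := hsymm y x
  simp only [map_sub, LinearMap.sub_apply]
  linarith

theorem sub_apply_nonneg (hsymm : ∀ x y, B x y = B y x) (hpos : ∀ x : V, x ≠ 0 → 0 < B x x)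
    {c : R} {x y : V} (hx : B x x = c) (hy : B y y = c) : 0 ≤ c - B x y := by
  have := two_mul_sub_apply_eq_apply_sub hsymm hx hy
  linarith [apply_self_nonneg_of_pos hpos (x - y)]

theorem sub_apply_eq_zero_iff (hsymm : ∀ x y, B x y = B y x)
    (hpos : ∀ x : V, x ≠ 0 → 0 < B x x) {c : R} {x y : V} (hx : B x x = c) (hy : B y y = c) :
    c - B x y = 0 ↔ y = x := by
  rw [eq_comm (a := y), ← sub_eq_zero (a := x), ← apply_self_eq_zero_iff_of_pos hpos,
    ← two_mul_sub_apply_eq_apply_sub hsymm hx hy, mul_eq_zero]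
  simp

theorem apply_sub_self_of_apply_eq_half (hsymm : ∀ x y, B x y = B y x) {h x : V}
    (hxh : B x h = B h h / 2) : B (h - x) (h - x) = B x x := by
  have := hsymm h x
  simp only [map_sub, LinearMap.sub_apply]
  linarith

theorem block_defect_range (hsymm : ∀ x y, B x y = B y x) (hpos : ∀ x : V, x ≠ 0 → 0 < B x x)
    {h x y : V} {c δ : R} (hδ : δ = 2 * c - B h h / 2) (hx : B x x = c) (hy : B y y = c)
    (hxh : B x h = B h h / 2) (hyh : B y h = B h h / 2) :
    (0 ≤ c - B x y ∧ c - B x y ≤ δ) ∧ (c - B x y = 0 ↔ y = x) ∧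
      (c - B x y = δ ↔ y = h - x) := by
  have hdual : B (h - x) (h - x) = c := (apply_sub_self_of_apply_eq_half hsymm hxh).trans hx
  have hdual_y : c - B (h - x) y = δ - (c - B x y) := by
    rw [apply_sub_left_of_apply_eq_half hsymm hyh, hδ]
    ring
  refine ⟨⟨sub_apply_nonneg hsymm hpos hx hy, ?_⟩, sub_apply_eq_zero_iff hsymm hpos hx hy, ?_⟩
  · linarith [sub_apply_nonneg hsymm hpos hdual hy]
  · rw [← sub_apply_eq_zero_iff hsymm hpos hdual hy, hdual_y, sub_eq_zero, eq_comm]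

end LinearMap.BilinForm

theorem Finset.card_le_two_of_forall_ne_imp_eq {α : Type*} {A : Finset α} (f : α → α)
    (hA : ∀ x ∈ A, ∀ y ∈ A, x ≠ y → y = f x) : A.card ≤ 2 := by
  by_contra! hcard
  obtain ⟨x, hx, y, hy, z, hz, hxy, hxz, hyz⟩ := Finset.two_lt_card.mp hcard
  exact hyz ((hA x hx y hy hxy).trans (hA x hx z hz hxz).symm)

/-- Within a self-dual block of defect δ, products range in [lsq − δ, lsq],
with the extremes attained exactly at the vector itself and its dual; in
particular blocks of defect 1 (resp. 2) contribute at most 1 (resp. 2)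
vectors to an admissible set, maximal pairs being dual pairs. -/
theorem selfdual_block_range {V : Type*} [AddCommGroup V] [Module ℚ V]
    (B : LinearMap.BilinForm ℚ V) (hsymm : ∀ x y, B x y = B y x)
    (hpos : ∀ x : V, x ≠ 0 → 0 < B x x)
    (h : V) (lsq δ : ℚ) (hδ : δ = 2 * lsq - B h h / 2) :
    (∀ l' l'' : V, B l' l' = lsq → B l'' l'' = lsq →
        B l' h = B h h / 2 → B l'' h = B h h / 2 →
      (0 ≤ lsq - B l' l'' ∧ lsq - B l' l'' ≤ δ) ∧
      (lsq - B l' l'' = 0 ↔ l'' = l') ∧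
      (lsq - B l' l'' = δ ↔ l'' = h - l')) ∧
    (∀ A : Finset V,
      (∀ x ∈ A, B x x = lsq ∧ B x h = B h h / 2) →
      (∀ x ∈ A, ∀ y ∈ A, x ≠ y →
        lsq - B x y = 2 ∨ lsq - B x y = 3 ∨ lsq - B x y = 5) →
      (δ = 1 → A.card ≤ 1) ∧
      (δ = 2 → A.card ≤ 2 ∧ ∀ x ∈ A, ∀ y ∈ A, x ≠ y → y = h - x)) := by
  refine ⟨fun _ _ => LinearMap.BilinForm.block_defect_range hsymm hpos hδ, fun A hA hadm => ?_⟩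
  have hrange : ∀ x ∈ A, ∀ y ∈ A, lsq - B x y ≤ δ ∧ (lsq - B x y = δ ↔ y = h - x) :=
    fun x hx y hy =>
      let ⟨⟨_, hle⟩, _, hdual⟩ := LinearMap.BilinForm.block_defect_range hsymm hpos hδ
        (hA x hx).1 (hA y hy).1 (hA x hx).2 (hA y hy).2
      ⟨hle, hdual⟩
  have hdual : δ = 2 → ∀ x ∈ A, ∀ y ∈ A, x ≠ y → y = h - x := by
    intro hδ2 x hx y hy hxy
    refine (hrange x hx y hy).2.1 ?_
    rcases hadm x hx y hy hxy with hd | hd | hd <;> linarith [(hrange x hx y hy).1]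
  refine ⟨fun hδ1 => Finset.card_le_one.2 fun x hx y hy => ?_,
    fun hδ2 => ⟨Finset.card_le_two_of_forall_ne_imp_eq _ (hdual hδ2), hdual hδ2⟩⟩
  by_contra hxy
  rcases hadm x hx y hy hxy with hd | hd | hd <;> linarith [(hrange x hx y hy).1]
end
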